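/- arXiv:2502.10985 — 3 statements merged into one kernel-verified Lean document; each statement's English description precedes it below -/
import Mathlib

section
/- Let K be a nonempty closed convex subset of a real inner product space (Euclidean space ℝ^n) with diameter at most D > 0, and let f_1, ..., f_T : ℝ^n → ℝ be convex differentiable functions whose gradients on K have norm at most G > 0. Consider the online gradient descent iterates defined by x_1 ∈ K and x_{t+1} = Π_K(x_t − η_t ∇f_t(x_t)), where Π_K denotes the metric projection onto K and η_t = D/(G√t). Then for all T ≥ 1, the regret satisfies ∑_{t=1}^T f_t(x_t) − min_{x ∈ K} ∑_{t=1}^T f_t(x) ≤ (3/2) · G · D · √T. -/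
/-!
Fix a comparator `x⋆ ∈ K` and write `η_t = D / (G √t)`. Projecting onto `K` does not increase the
distance to `x⋆`, so each step gives
`⟪∇f_t(x_t), x_t - x⋆⟫ ≤ (‖x_t - x⋆‖² - ‖x_{t+1} - x⋆‖²) / (2η_t) + η_t G² / 2`,
and by convexity the left side bounds `f_t(x_t) - f_t(x⋆)`. Summing over `t`, the first terms
telescope against the nondecreasing weights `1 / (2η_t)` to at most `D² / (2η_T) = GD√T / 2`, and
the second ones add up to `(GD / 2) ∑ 1/√t ≤ GD√T`.
-/

open RealInnerProductSpace Finset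

theorem ConvexOn.add_fderiv_sub_le {E : Type*} [NormedAddCommGroup E] [NormedSpace ℝ E]
    {s : Set E} {f : E → ℝ} {f' : E →L[ℝ] ℝ} {x y : E}
    (hf : ConvexOn ℝ s f) (hx : x ∈ s) (hy : y ∈ s) (hf' : HasFDerivAt f f' x) :
    f x + f' (y - x) ≤ f y := by
  set ℓ : ℝ →ᵃ[ℝ] E := AffineMap.lineMap x y
  have hg : ConvexOn ℝ (Set.Icc 0 1) (f ∘ ℓ) :=
    (hf.comp_affineMap ℓ).subset (fun θ hθ => hf.1.lineMap_mem hx hy hθ) (convex_Icc 0 1)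
  have hg' : HasDerivAt (f ∘ ℓ) (f' (y - x)) 0 :=
    (show HasFDerivAt f f' (ℓ 0) by simpa [ℓ] using hf').comp_hasDerivAt 0
      AffineMap.hasDerivAt_lineMap
  have := hg.le_slope_of_hasDerivAt (by simp) (by simp) zero_lt_one hg'
  rw [slope_def_field] at this
  simp only [Function.comp_apply, ℓ, AffineMap.lineMap_apply_zero,
    AffineMap.lineMap_apply_one] at this
  linarith

section InnerProductSpace

variable {E : Type*} [NormedAddCommGroup E] [InnerProductSpace ℝ E]

theorem ConvexOn.add_inner_sub_le [CompleteSpace E] {s : Set E} {f : E → ℝ} {g x y : E}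
    (hf : ConvexOn ℝ s f) (hx : x ∈ s) (hy : y ∈ s) (hg : HasGradientAt f g x) :
    f x + ⟪g, y - x⟫ ≤ f y := by
  simpa using hf.add_fderiv_sub_le hx hy (hasGradientAt_iff_hasFDerivAt.mp hg)

theorem Convex.real_inner_sub_le_zero_of_isMinOn {K : Set E} {y p z : E} (hK : Convex ℝ K)
    (hp : p ∈ K) (hmin : IsMinOn (dist · y) K p) (hz : z ∈ K) :
    ⟪y - p, z - p⟫ ≤ 0 := by
  have : Nonempty K := ⟨⟨p, hp⟩⟩
  refine (norm_eq_iInf_iff_real_inner_le_zero hK hp).mp (le_antisymm ?_ ?_) z hz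
  · exact le_ciInf fun w => by simpa [dist_eq_norm, norm_sub_rev] using isMinOn_iff.mp hmin w w.2
  · exact ciInf_le ⟨0, by rintro _ ⟨w, rfl⟩; positivity⟩ (⟨p, hp⟩ : K)

theorem Convex.norm_sub_sq_le_of_isMinOn {K : Set E} {y p z : E} (hK : Convex ℝ K)
    (hp : p ∈ K) (hmin : IsMinOn (dist · y) K p) (hz : z ∈ K) :
    ‖p - z‖ ^ 2 ≤ ‖y - z‖ ^ 2 := by
  have h := hK.real_inner_sub_le_zero_of_isMinOn hp hmin hz
  rw [← sub_add_sub_cancel y p z, norm_add_sq_real, ← neg_sub z p, inner_neg_right]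
  nlinarith [sq_nonneg ‖y - p‖]

theorem Convex.inner_le_of_isMinOn_sub_smul {K : Set E} {x g p z : E} {η G : ℝ}
    (hK : Convex ℝ K) (hη : 0 < η) (hg : ‖g‖ ≤ G)
    (hp : p ∈ K) (hmin : IsMinOn (dist · (x - η • g)) K p) (hz : z ∈ K) :
    ⟪g, x - z⟫ ≤ (‖x - z‖ ^ 2 - ‖p - z‖ ^ 2) / (2 * η) + η * G ^ 2 / 2 := by
  have hproj := hK.norm_sub_sq_le_of_isMinOn hp hmin hz
  have hexpand : ‖x - η • g - z‖ ^ 2 = ‖x - z‖ ^ 2 - 2 * η * ⟪g, x - z⟫ + η ^ 2 * ‖g‖ ^ 2 := by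
    rw [sub_right_comm, norm_sub_sq_real, real_inner_smul_right, real_inner_comm, norm_smul,
      Real.norm_of_nonneg hη.le]
    ring
  have hg2 : η ^ 2 * ‖g‖ ^ 2 ≤ η ^ 2 * G ^ 2 := by gcongr
  rw [div_add' _ _ _ (by positivity), le_div_iff₀ (by positivity)]
  nlinarith

theorem ConvexOn.sub_le_of_isMinOn_dist_sub_smul_gradient [CompleteSpace E] {K : Set E}
    {f : E → ℝ} {x p z : E} {η G : ℝ} (hf : ConvexOn ℝ Set.univ f) (hfx : DifferentiableAt ℝ f x)
    (hK : Convex ℝ K) (hη : 0 < η) (hG : ‖gradient f x‖ ≤ G)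
    (hp : p ∈ K) (hmin : IsMinOn (dist · (x - η • gradient f x)) K p) (hz : z ∈ K) :
    f x - f z ≤ (‖x - z‖ ^ 2 - ‖p - z‖ ^ 2) / (2 * η) + η * G ^ 2 / 2 := by
  have hlin := hf.add_inner_sub_le (Set.mem_univ x) (Set.mem_univ z) hfx.hasGradientAt
  rw [← neg_sub, inner_neg_right] at hlin
  linarith [hK.inner_le_of_isMinOn_sub_smul hη hG hp hmin hz]

end InnerProductSpace

theorem sum_Icc_mul_sub_succ_le {w a : ℕ → ℝ} {B : ℝ} (hw : Monotone w) (hw0 : 0 ≤ w 0)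
    (haB : ∀ t, 1 ≤ t → a t ≤ B) (T : ℕ) :
    ∑ t ∈ Icc 1 T, w t * (a t - a (t + 1)) ≤ w T * (B - a (T + 1)) := by
  induction T with
  | zero => simpa using mul_nonneg hw0 (sub_nonneg.mpr (haB 1 le_rfl))
  | succ T ih =>
    rw [sum_Icc_succ_top (by omega)]
    have := mul_le_mul_of_nonneg_right (hw T.le_succ) (sub_nonneg.mpr (haB (T + 1) (by omega)))
    linarith

theorem sum_Icc_inv_sqrt_le (T : ℕ) : ∑ t ∈ Icc 1 T, (√t)⁻¹ ≤ 2 * √T := by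
  induction T with
  | zero => simp
  | succ T ih =>
    rw [sum_Icc_succ_top (by omega)]
    suffices (√(T + 1 : ℕ))⁻¹ ≤ 2 * √(T + 1 : ℕ) - 2 * √T by linarith
    have hT : √(T + 1 : ℕ) ^ 2 = T + 1 := by rw [Real.sq_sqrt (by positivity)]; push_cast; ring
    have hT' : √(T : ℕ) ^ 2 = T := Real.sq_sqrt (by positivity)
    rw [inv_le_iff_one_le_mul₀ (by positivity)]
    nlinarith [sq_nonneg (√(T + 1 : ℕ) - √T), Real.sqrt_nonneg T]

theorem ogd_regret_bound_general
    (n : ℕ) (K : Set (EuclideanSpace ℝ (Fin n)))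
    (hKcv : Convex ℝ K)
    (D G : ℝ) (hD : 0 < D) (hG : 0 < G)
    (hdiam : ∀ x ∈ K, ∀ y ∈ K, dist x y ≤ D)
    (T : ℕ)
    (f : ℕ → EuclideanSpace ℝ (Fin n) → ℝ)
    (hconv : ∀ t, ConvexOn ℝ Set.univ (f t))
    (hdiff : ∀ t, Differentiable ℝ (f t))
    (hgrad : ∀ t, ∀ x ∈ K, ‖gradient (f t) x‖ ≤ G)
    (proj : EuclideanSpace ℝ (Fin n) → EuclideanSpace ℝ (Fin n))
    (hprojmem : ∀ y, proj y ∈ K)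
    (hprojdist : ∀ y, ∀ z ∈ K, dist (proj y) y ≤ dist z y)
    (x : ℕ → EuclideanSpace ℝ (Fin n))
    (hx1 : x 1 ∈ K)
    (hstep : ∀ t, 1 ≤ t →
      x (t + 1) = proj (x t - (D / (G * Real.sqrt t)) • gradient (f t) (x t)))
    (xstar : EuclideanSpace ℝ (Fin n)) (hxstar : xstar ∈ K) :
    ∑ t ∈ Finset.Icc 1 T, f t (x t) - ∑ t ∈ Finset.Icc 1 T, f t xstar
      ≤ (3 / 2) * G * D * Real.sqrt T := by
  have hmem : ∀ t, 1 ≤ t → x t ∈ K := by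
    intro t ht
    induction t, ht using Nat.le_induction with
    | base => exact hx1
    | succ t ht _ => rw [hstep t ht]; exact hprojmem _
  set a : ℕ → ℝ := fun t => ‖x t - xstar‖ ^ 2
  -- `w t = 1 / (2 η_t)`
  set w : ℕ → ℝ := fun t => G * √t / (2 * D)
  have ha : ∀ t, 1 ≤ t → a t ≤ D ^ 2 := fun t ht => by
    simpa [a, dist_eq_norm] using pow_le_pow_left₀ dist_nonneg (hdiam _ (hmem t ht) _ hxstar) 2
  have hround : ∀ t ∈ Icc 1 T,
      f t (x t) - f t xstar ≤ w t * (a t - a (t + 1)) + D * G / 2 * (√t)⁻¹ := by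
    intro t ht
    replace ht : 1 ≤ t := (mem_Icc.mp ht).1
    have hsqrt : 0 < √t := Real.sqrt_pos.mpr (by exact_mod_cast ht)
    have h := (hconv t).sub_le_of_isMinOn_dist_sub_smul_gradient (η := D / (G * √t))
      (hdiff t (x t)) hKcv (by positivity) (hgrad t _ (hmem t ht)) (hprojmem _)
      (isMinOn_iff.mpr (hprojdist _)) hxstar
    rw [← hstep t ht] at h
    exact h.trans_eq (by simp only [a, w]; field_simp)
  calc ∑ t ∈ Icc 1 T, f t (x t) - ∑ t ∈ Icc 1 T, f t xstar
      ≤ ∑ t ∈ Icc 1 T, (w t * (a t - a (t + 1)) + D * G / 2 * (√t)⁻¹) := by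
        rw [← sum_sub_distrib]; exact sum_le_sum hround
    _ ≤ w T * (D ^ 2 - a (T + 1)) + D * G / 2 * (2 * √T) := by
        rw [sum_add_distrib, ← mul_sum]
        gcongr
        · exact sum_Icc_mul_sub_succ_le (fun s t hst => by simp only [w]; gcongr) (by simp [w]) ha T
        · exact sum_Icc_inv_sqrt_le T
    _ ≤ 3 / 2 * G * D * √T := by
        have : 0 ≤ w T * a (T + 1) := by positivity
        have : w T * D ^ 2 = G * D * √T / 2 := by simp only [w]; field_simp
        nlinarith

/-- **Online gradient descent regret bound** (Hazan, Theorem 3.1).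
For convex differentiable cost functions `f 1, …, f T` with gradients bounded by `G` on a
nonempty closed convex set `K` of diameter at most `D`, the projected online gradient
descent iterates with step sizes `η t = D / (G √t)` satisfy
`∑ f t (x t) - min_{x ∈ K} ∑ f t x ≤ (3/2) G D √T`. -/
theorem ogd_regret_bound
    (n : ℕ) (K : Set (EuclideanSpace ℝ (Fin n)))
    (hKne : K.Nonempty) (hKcl : IsClosed K) (hKcv : Convex ℝ K)
    (D G : ℝ) (hD : 0 < D) (hG : 0 < G)
    (hdiam : ∀ x ∈ K, ∀ y ∈ K, dist x y ≤ D)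
    (T : ℕ) (hT : 1 ≤ T)
    (f : ℕ → EuclideanSpace ℝ (Fin n) → ℝ)
    (hconv : ∀ t, ConvexOn ℝ Set.univ (f t))
    (hdiff : ∀ t, Differentiable ℝ (f t))
    (hgrad : ∀ t, ∀ x ∈ K, ‖gradient (f t) x‖ ≤ G)
    (proj : EuclideanSpace ℝ (Fin n) → EuclideanSpace ℝ (Fin n))
    (hprojmem : ∀ y, proj y ∈ K)
    (hprojdist : ∀ y, ∀ z ∈ K, dist (proj y) y ≤ dist z y)
    (x : ℕ → EuclideanSpace ℝ (Fin n))
    (hx1 : x 1 ∈ K)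
    (hstep : ∀ t, 1 ≤ t →
      x (t + 1) = proj (x t - (D / (G * Real.sqrt t)) • gradient (f t) (x t)))
    (xstar : EuclideanSpace ℝ (Fin n)) (hxstar : xstar ∈ K)
    (hmin : IsMinOn (fun z => ∑ t ∈ Finset.Icc 1 T, f t z) K xstar) :
    ∑ t ∈ Finset.Icc 1 T, f t (x t) - ∑ t ∈ Finset.Icc 1 T, f t xstar
      ≤ (3 / 2) * G * D * Real.sqrt T :=
  ogd_regret_bound_general n K hKcv D G hD hG hdiam T f hconv hdiff hgrad proj hprojmem hprojdist x
    hx1 hstep xstar hxstar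
end

section
/- Fix N ≥ 1, a matrix P : Fin N → Fin N → ℝ with 0 ≤ P i j ≤ 1 and P j i = 1 − P i j for all i, j, and a probability vector q : Fin N → ℝ with q i > 0 for all i and ∑_i q i = 1 (product matchmaking: player pair (i,j) is drawn with probability q i · q j). Suppose θ* : Fin N → ℝ is a stationary point of the population Bradley–Terry negative log-likelihood, i.e., for every i, ∑_j q i · q j · (P i j − σ(θ* i − θ* j)) = 0, where σ(x) = 1/(1+e^{−x}) is the logistic function. Then for all players i, k: θ* i ≤ θ* k if and only if ∑_j q j · P i j ≤ ∑_j q j · P k j; that is, the ranking induced by θ* is identical to the ranking induced by the q-average win rate. -/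
/-!
At a stationary point the gradient condition for player `i`, divided by `q i > 0`, says that the
`q`-average win rate of `i` equals `∑ j, q j * σ(θ i - θ j)`. Because the matchmaking is a
product, this is one and the same function `t ↦ ∑ j, q j * σ(t - θ j)` evaluated at `t = θ i`
for every player, and that function is strictly increasing.
-/

noncomputable def logistic (x : ℝ) : ℝ := 1 / (1 + Real.exp (-x))

theorem logistic_eq_sigmoid : logistic = Real.sigmoid :=
  funext fun _ => one_div _

theorem logistic_strictMono : StrictMono logistic :=
  logistic_eq_sigmoid ▸ Real.sigmoid_strictMono

theorem strictMono_sum_mul_logistic_sub {ι : Type*} [Fintype ι] [Nonempty ι]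
    (q θ : ι → ℝ) (hq : ∀ j, 0 < q j) :
    StrictMono fun t => ∑ j, q j * logistic (t - θ j) :=
  fun _ _ hst => Finset.sum_lt_sum_of_nonempty Finset.univ_nonempty fun j _ =>
    mul_lt_mul_of_pos_left (logistic_strictMono (sub_lt_sub_right hst _)) (hq j)

theorem sum_mul_eq_sum_mul_logistic_of_stationary {ι : Type*} [Fintype ι]
    (P : ι → ι → ℝ) (q θ : ι → ℝ) (i : ι) (hqi : q i ≠ 0)
    (hstat : ∑ j, q i * q j * (P i j - logistic (θ i - θ j)) = 0) :
    ∑ j, q j * P i j = ∑ j, q j * logistic (θ i - θ j) := by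
  have h : q i * (∑ j, q j * P i j - ∑ j, q j * logistic (θ i - θ j)) = 0 := by
    rw [mul_sub, Finset.mul_sum, Finset.mul_sum, ← Finset.sum_sub_distrib, ← hstat]
    exact Finset.sum_congr rfl fun j _ => by ring
  exact sub_eq_zero.mp ((mul_eq_zero.mp h).resolve_left hqi)

theorem elo_mle_ranking_eq_avg_winrate_ranking_general
    (N : ℕ)
    (P : Fin N → Fin N → ℝ)
    (q : Fin N → ℝ) (hq : ∀ i, 0 < q i)
    (θ : Fin N → ℝ)
    (hstat : ∀ i, ∑ j, q i * q j * (P i j - logistic (θ i - θ j)) = 0) :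
    ∀ i k, θ i ≤ θ k ↔ (∑ j, q j * P i j) ≤ ∑ j, q j * P k j := by
  intro i k
  have : Nonempty (Fin N) := ⟨i⟩
  have hwin : ∀ i, ∑ j, q j * P i j = ∑ j, q j * logistic (θ i - θ j) := fun i =>
    sum_mul_eq_sum_mul_logistic_of_stationary P q θ i (hq i).ne' (hstat i)
  rw [hwin i, hwin k]
  exact (strictMono_sum_mul_logistic_sub q θ hq).le_iff_le.symm

/-- Under product matchmaking `q i * q j`, any stationary point `θ` of the population
Bradley–Terry negative log-likelihood induces the same ranking as the `q`-average win rate. -/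
theorem elo_mle_ranking_eq_avg_winrate_ranking
    (N : ℕ) (hN : 1 ≤ N)
    (P : Fin N → Fin N → ℝ)
    (hP0 : ∀ i j, 0 ≤ P i j) (hP1 : ∀ i j, P i j ≤ 1)
    (hPskew : ∀ i j, P j i = 1 - P i j)
    (q : Fin N → ℝ) (hq : ∀ i, 0 < q i) (hqsum : ∑ i, q i = 1)
    (θ : Fin N → ℝ)
    (hstat : ∀ i, ∑ j, q i * q j * (P i j - logistic (θ i - θ j)) = 0) :
    ∀ i k, θ i ≤ θ k ↔ (∑ j, q j * P i j) ≤ ∑ j, q j * P k j :=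
  elo_mle_ranking_eq_avg_winrate_ranking_general N P q hq θ hstat
end

section
/- There exist N ≥ 3 and a matrix P : Fin N → Fin N → ℝ with 0 ≤ P i j ≤ 1, P j i = 1 − P i j, and P i i = 1/2, such that P is weakly stochastically transitive with respect to an ordering π, yet the ranking induced by average win rates disagrees with π: there exist players i, j with π(i) > π(j) but ∑_k P i k < ∑_k P j k. -/
/-!
Three players: player 1 beats player 0 surely, while player 2 merely ties with everyone.
Ordering the players 0 < 1 < 2 is weakly stochastically transitive, since nobody loses to a
lower-ranked player, but player 1's crushing win over player 0 lifts its win rate above that of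
the top-ranked player 2.
-/

noncomputable def wstCounterexample : Fin 3 → Fin 3 → ℝ :=
  ![![1 / 2, 0, 1 / 2],
    ![1, 1 / 2, 1 / 2],
    ![1 / 2, 1 / 2, 1 / 2]]

lemma wstCounterexample_mem_Icc (i j : Fin 3) :
    0 ≤ wstCounterexample i j ∧ wstCounterexample i j ≤ 1 := by
  fin_cases i <;> fin_cases j <;> norm_num [wstCounterexample]

lemma wstCounterexample_swap (i j : Fin 3) :
    wstCounterexample j i = 1 - wstCounterexample i j := by
  fin_cases i <;> fin_cases j <;> norm_num [wstCounterexample]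

lemma wstCounterexample_diag (i : Fin 3) : wstCounterexample i i = 1 / 2 := by
  fin_cases i <;> rfl

lemma half_le_wstCounterexample_of_lt {i j : Fin 3} (h : j < i) :
    1 / 2 ≤ wstCounterexample i j := by
  fin_cases i <;> fin_cases j <;> revert h <;> norm_num [wstCounterexample]

lemma sum_wstCounterexample_two_lt_one :
    ∑ k, wstCounterexample 2 k < ∑ k, wstCounterexample 1 k := by
  simp only [Fin.sum_univ_three, wstCounterexample, Matrix.cons_val]
  norm_num

/-- There is a weakly stochastically transitive win-probability matrix whose
average-win-rate ranking disagrees with the ground-truth ordering: some pair of players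
`i, j` has `π i > π j` yet `∑ k, P i k < ∑ k, P j k`. -/
theorem wst_avg_winrate_can_disagree :
    ∃ (N : ℕ) (P : Fin N → Fin N → ℝ) (π : Equiv.Perm (Fin N)),
      3 ≤ N ∧
      (∀ i j, 0 ≤ P i j ∧ P i j ≤ 1) ∧
      (∀ i j, P j i = 1 - P i j) ∧
      (∀ i, P i i = 1 / 2) ∧
      (∀ i j, π j < π i → (1 / 2 : ℝ) ≤ P i j) ∧
      (∃ i j, π j < π i ∧ ∑ k, P i k < ∑ k, P j k) :=
  ⟨3, wstCounterexample, Equiv.refl _, le_rfl, wstCounterexample_mem_Icc, wstCounterexample_swap,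
    wstCounterexample_diag, fun _ _ => half_le_wstCounterexample_of_lt,
    ⟨2, 1, by decide, sum_wstCounterexample_two_lt_one⟩⟩
end
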